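/- Let α ∈ (0, N). There is a constant c = c(N, α) > 0 such that for every nonnegative measurable u : ℝ^N → ℝ with finite Morrey norm ‖u‖_{L^{1,α}}, every x ∈ ℝ^N and every R > 0, the Gaussian convolution satisfies (4π)^{−N/2} R^{−N} ∫_{ℝ^N} e^{−|x−y|²/(4R²)} u(y) dy ≤ c ‖u‖_{L^{1,α}} R^{−α}. Equivalently, sup_{t>0} t^{α/2} ‖e^{tΔ} u‖_{L^∞} ≤ c ‖u‖_{L^{1,α}}, i.e., the Morrey space L^{1,α} embeds into the homogeneous Besov space Ḃ^{−α}_{∞,∞} defined by the thermic norm. -/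

import Mathlib

open MeasureTheory ENNReal Real

/-- The Morrey norm `‖u‖_{L^{r,γ}}`:
`‖u‖^r_{L^{r,γ}} = sup_{R>0, x} R^γ ⨍_{B_R(x)} |u|^r`. -/
noncomputable def morreyNorm (N : ℕ) (r γ : ℝ) (u : EuclideanSpace ℝ (Fin N) → ℝ) : ℝ≥0∞ :=
  (⨆ (R : ℝ) (_ : 0 < R) (x : EuclideanSpace ℝ (Fin N)),
    ENNReal.ofReal (R ^ γ) *
      ((∫⁻ y in Metric.ball x R, ENNReal.ofReal (|u y| ^ r)) /
        MeasureTheory.volume (Metric.ball x R))) ^ (1 / r)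

/-! The Gaussian is dominated by a dyadic staircase: if `n` is least with `|x - y| < 2ⁿR`, then
`e^{-|x-y|²/4R²} ≤ e^{(1-4ⁿ)/16}`. Integrated against `|u|`, each ball `B(x, 2ⁿR)` contributes at
most `‖u‖_{L^{1,α}} |B₁| (2ⁿR)^{N-α}` by the definition of the Morrey norm, so the Gaussian integral
is at most `‖u‖_{L^{1,α}} |B₁| R^{N-α} ∑ₙ 2^{n(N-α)} e^{(1-4ⁿ)/16}`; the doubly exponential decay
of the weights makes this series converge (ratio test). -/

open Filter Topology Metric

noncomputable def gaussDyadicCoeff (n : ℕ) : ℝ := exp ((1 - 4 ^ n) / 16)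

theorem gaussDyadicCoeff_pos (n : ℕ) : 0 < gaussDyadicCoeff n := exp_pos _

theorem gaussDyadicCoeff_succ (n : ℕ) :
    gaussDyadicCoeff (n + 1) = exp (-(3 * 4 ^ n / 16)) * gaussDyadicCoeff n := by
  rw [gaussDyadicCoeff, gaussDyadicCoeff, ← exp_add, pow_succ]
  ring_nf

theorem summable_geometric_mul_gaussDyadicCoeff (r : ℝ) :
    Summable fun n : ℕ => r ^ n * gaussDyadicCoeff n := by
  have hdecay : Tendsto (fun n : ℕ => |r| * exp (-(3 * 4 ^ n / 16))) atTop (𝓝 0) := by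
    have h4 : Tendsto (fun n : ℕ => 3 * (4 : ℝ) ^ n / 16) atTop atTop :=
      ((tendsto_pow_atTop_atTop_of_one_lt (by norm_num)).const_mul_atTop
        (by norm_num)).atTop_div_const (by norm_num)
    simpa using (tendsto_exp_atBot.comp (tendsto_neg_atTop_atBot.comp h4)).const_mul |r|
  refine summable_of_ratio_norm_eventually_le (r := 1 / 2) (by norm_num) ?_
  filter_upwards [hdecay.eventually_le_const (by norm_num : (0 : ℝ) < 1 / 2)] with n hn
  simp only [pow_succ, gaussDyadicCoeff_succ, norm_mul, norm_pow, Real.norm_eq_abs,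
    abs_of_pos (exp_pos _)]
  calc |r| ^ n * |r| * (exp (-(3 * 4 ^ n / 16)) * |gaussDyadicCoeff n|)
      = |r| * exp (-(3 * 4 ^ n / 16)) * (|r| ^ n * |gaussDyadicCoeff n|) := by ring
    _ ≤ 1 / 2 * (|r| ^ n * |gaussDyadicCoeff n|) := by gcongr

theorem exists_lt_two_pow_mul_and_exp_le_gaussDyadicCoeff {d R : ℝ} (hd : 0 ≤ d) (hR : 0 < R) :
    ∃ n : ℕ, d < 2 ^ n * R ∧ exp (-d ^ 2 / (4 * R ^ 2)) ≤ gaussDyadicCoeff n := by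
  have hex : ∃ n : ℕ, d < 2 ^ n * R := by
    obtain ⟨n, hn⟩ := pow_unbounded_of_one_lt (d / R) one_lt_two
    exact ⟨n, (div_lt_iff₀ hR).mp hn⟩
  refine ⟨Nat.find hex, Nat.find_spec hex, ?_⟩
  set n := Nat.find hex
  -- either `n = 0`, or `2 ^ (n - 1) * R ≤ d` by minimality of `n`
  have hsq : (4 : ℝ) ^ n * R ^ 2 ≤ 4 * d ^ 2 + R ^ 2 := by
    rcases eq_or_ne n 0 with h0 | hn0
    · rw [h0]; nlinarith
    · obtain ⟨m, hm⟩ := Nat.exists_eq_add_one_of_ne_zero hn0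
      have hann : 2 ^ m * R ≤ d := not_lt.mp (Nat.find_min hex (by omega))
      have h4 : (4 : ℝ) ^ n = 4 * (2 ^ m) ^ 2 := by
        rw [hm, pow_succ, ← pow_mul, mul_comm m, pow_mul]; norm_num; ring
      rw [h4]
      nlinarith [mul_pos (pow_pos two_pos m) hR]
  rw [gaussDyadicCoeff, exp_le_exp, div_le_div_iff₀ (by positivity) (by norm_num)]
  nlinarith

theorem lintegral_gaussian_mul_le_tsum_ball {X : Type*} [PseudoMetricSpace X] [MeasurableSpace X]
    [OpensMeasurableSpace X] (μ : Measure X) {f : X → ℝ≥0∞} (hf : Measurable f) (x : X)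
    {R : ℝ} (hR : 0 < R) :
    ∫⁻ y, ENNReal.ofReal (exp (-dist x y ^ 2 / (4 * R ^ 2))) * f y ∂μ ≤
      ∑' n, ENNReal.ofReal (gaussDyadicCoeff n) * ∫⁻ y in ball x (2 ^ n * R), f y ∂μ := by
  have hpointwise : ∀ y, ENNReal.ofReal (exp (-dist x y ^ 2 / (4 * R ^ 2))) * f y ≤
      ∑' n, ENNReal.ofReal (gaussDyadicCoeff n) * (ball x (2 ^ n * R)).indicator f y := by
    intro y
    obtain ⟨n, hyn, hexp⟩ :=
      exists_lt_two_pow_mul_and_exp_le_gaussDyadicCoeff (@dist_nonneg _ _ x y) hR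
    refine le_trans ?_ (ENNReal.le_tsum n)
    rw [Set.indicator_of_mem (mem_ball'.mpr hyn)]
    gcongr
  calc ∫⁻ y, ENNReal.ofReal (exp (-dist x y ^ 2 / (4 * R ^ 2))) * f y ∂μ
      ≤ ∫⁻ y, ∑' n, ENNReal.ofReal (gaussDyadicCoeff n) * (ball x (2 ^ n * R)).indicator f y ∂μ :=
        lintegral_mono hpointwise
    _ = ∑' n, ENNReal.ofReal (gaussDyadicCoeff n) * ∫⁻ y in ball x (2 ^ n * R), f y ∂μ := by
        rw [lintegral_tsum fun n => ((hf.indicator measurableSet_ball).const_mul _).aemeasurable]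
        simp_rw [lintegral_const_mul _ (hf.indicator measurableSet_ball),
          lintegral_indicator measurableSet_ball]

section Morrey

variable {N : ℕ}

theorem le_morreyNorm_one (γ : ℝ) (u : EuclideanSpace ℝ (Fin N) → ℝ) {ρ : ℝ} (hρ : 0 < ρ)
    (x : EuclideanSpace ℝ (Fin N)) :
    ENNReal.ofReal (ρ ^ γ) *
        ((∫⁻ y in ball x ρ, ENNReal.ofReal |u y|) / volume (ball x ρ)) ≤ morreyNorm N 1 γ u := by
  simp only [morreyNorm, Real.rpow_one, div_one, ENNReal.rpow_one]
  exact le_iSup₂_of_le ρ hρ (le_iSup_of_le x le_rfl)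

theorem lintegral_ball_le_morreyNorm (γ : ℝ) (u : EuclideanSpace ℝ (Fin N) → ℝ) {ρ : ℝ}
    (hρ : 0 < ρ) (x : EuclideanSpace ℝ (Fin N)) :
    ∫⁻ y in ball x ρ, ENNReal.ofReal |u y| ≤
      morreyNorm N 1 γ u * volume (ball (0 : EuclideanSpace ℝ (Fin N)) 1) *
        ENNReal.ofReal (ρ ^ ((N : ℝ) - γ)) := by
  set I := ∫⁻ y in ball x ρ, ENNReal.ofReal |u y|
  have hV : volume (ball x ρ) =
      ENNReal.ofReal (ρ ^ N) * volume (ball (0 : EuclideanSpace ℝ (Fin N)) 1) := by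
    rw [Measure.addHaar_ball_of_pos volume x hρ, finrank_euclideanSpace_fin]
  have hpow :
      ENNReal.ofReal (ρ ^ N) = ENNReal.ofReal (ρ ^ ((N : ℝ) - γ)) * ENNReal.ofReal (ρ ^ γ) := by
    rw [← ENNReal.ofReal_mul (by positivity), ← rpow_add hρ, sub_add_cancel, Real.rpow_natCast]
  calc I = I / volume (ball x ρ) * volume (ball x ρ) :=
        (ENNReal.div_mul_cancel (measure_ball_pos volume x hρ).ne' measure_ball_lt_top.ne).symm
    _ = ENNReal.ofReal (ρ ^ γ) * (I / volume (ball x ρ)) *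
          volume (ball (0 : EuclideanSpace ℝ (Fin N)) 1) * ENNReal.ofReal (ρ ^ ((N : ℝ) - γ)) := by
        generalize I / volume (ball x ρ) = a
        rw [hV, hpow]
        ring
    _ ≤ _ := by gcongr; exact le_morreyNorm_one γ u hρ x

theorem lintegral_gaussian_mul_le_morreyNorm (γ : ℝ) {u : EuclideanSpace ℝ (Fin N) → ℝ}
    (hu : Measurable u) (x : EuclideanSpace ℝ (Fin N)) {R : ℝ} (hR : 0 < R) :
    ∫⁻ y, ENNReal.ofReal (exp (-‖x - y‖ ^ 2 / (4 * R ^ 2)) * u y) ≤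
      ENNReal.ofReal (∑' n : ℕ, ((2 : ℝ) ^ ((N : ℝ) - γ)) ^ n * gaussDyadicCoeff n) *
        volume (ball (0 : EuclideanSpace ℝ (Fin N)) 1) * morreyNorm N 1 γ u *
          ENNReal.ofReal (R ^ ((N : ℝ) - γ)) := by
  set β := (N : ℝ) - γ
  set V₁ := volume (ball (0 : EuclideanSpace ℝ (Fin N)) 1)
  set M := morreyNorm N 1 γ u
  calc ∫⁻ y, ENNReal.ofReal (exp (-‖x - y‖ ^ 2 / (4 * R ^ 2)) * u y)
      ≤ ∫⁻ y, ENNReal.ofReal (exp (-dist x y ^ 2 / (4 * R ^ 2))) * ENNReal.ofReal |u y| := by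
        refine lintegral_mono fun y => ?_
        rw [dist_eq_norm, ← ENNReal.ofReal_mul (exp_pos _).le]
        gcongr
        exact le_abs_self _
    _ ≤ ∑' n, ENNReal.ofReal (gaussDyadicCoeff n) *
          ∫⁻ y in ball x (2 ^ n * R), ENNReal.ofReal |u y| :=
        lintegral_gaussian_mul_le_tsum_ball volume hu.abs.ennreal_ofReal x hR
    _ ≤ ∑' n : ℕ, ENNReal.ofReal (gaussDyadicCoeff n) *
          (M * V₁ * ENNReal.ofReal ((2 ^ n * R) ^ β)) :=
        ENNReal.tsum_le_tsum fun n => by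
          gcongr
          exact lintegral_ball_le_morreyNorm γ u (by positivity) x
    _ = ∑' n : ℕ, ENNReal.ofReal ((2 ^ β) ^ n * gaussDyadicCoeff n) *
          (V₁ * M * ENNReal.ofReal (R ^ β)) := by
        refine tsum_congr fun n => ?_
        rw [mul_rpow (by positivity) hR.le, ← rpow_pow_comm zero_le_two,
          ENNReal.ofReal_mul (by positivity), ENNReal.ofReal_mul (by positivity)]
        ring
    _ = _ := by
        rw [ENNReal.tsum_mul_right, ← ENNReal.ofReal_tsum_of_nonneg
          (fun n => mul_nonneg (by positivity) (gaussDyadicCoeff_pos n).le)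
          (summable_geometric_mul_gaussDyadicCoeff _)]
        ring

end Morrey

theorem morrey_embeds_besov_general (N : ℕ) (α : ℝ) :
    ∃ c : ℝ, 0 < c ∧ ∀ (u : EuclideanSpace ℝ (Fin N) → ℝ), Measurable u →
      (∀ y, 0 ≤ u y) → morreyNorm N 1 α u ≠ ⊤ →
      ∀ (x : EuclideanSpace ℝ (Fin N)) (R : ℝ), 0 < R →
        ENNReal.ofReal ((4 * π) ^ (-(N : ℝ) / 2) * R ^ (-(N : ℝ))) *
            (∫⁻ y, ENNReal.ofReal (Real.exp (-‖x - y‖ ^ 2 / (4 * R ^ 2)) * u y)) ≤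
          ENNReal.ofReal c * morreyNorm N 1 α u * ENNReal.ofReal (R ^ (-α)) := by
  set S := ∑' n : ℕ, ((2 : ℝ) ^ ((N : ℝ) - α)) ^ n * gaussDyadicCoeff n
  set V₁ := volume (ball (0 : EuclideanSpace ℝ (Fin N)) 1)
  have hS : 0 < S := (summable_geometric_mul_gaussDyadicCoeff _).tsum_pos
    (fun n => mul_nonneg (by positivity) (gaussDyadicCoeff_pos n).le) 0
    (by simp [gaussDyadicCoeff])
  have hV₁ : 0 < V₁.toReal :=
    ENNReal.toReal_pos (measure_ball_pos _ _ one_pos).ne' measure_ball_lt_top.ne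
  refine ⟨(4 * π) ^ (-(N : ℝ) / 2) * S * V₁.toReal, by positivity, ?_⟩
  intro u hu _ _ x R hR
  have hRpow : R ^ (-α) = R ^ (-(N : ℝ)) * R ^ ((N : ℝ) - α) := by
    rw [← rpow_add hR]; ring_nf
  calc ENNReal.ofReal ((4 * π) ^ (-(N : ℝ) / 2) * R ^ (-(N : ℝ))) *
        ∫⁻ y, ENNReal.ofReal (exp (-‖x - y‖ ^ 2 / (4 * R ^ 2)) * u y)
      ≤ ENNReal.ofReal ((4 * π) ^ (-(N : ℝ) / 2) * R ^ (-(N : ℝ))) *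
          (ENNReal.ofReal S * V₁ * morreyNorm N 1 α u * ENNReal.ofReal (R ^ ((N : ℝ) - α))) := by
        gcongr
        exact lintegral_gaussian_mul_le_morreyNorm α hu x hR
    _ = _ := by
        rw [hRpow, ENNReal.ofReal_mul (by positivity), ENNReal.ofReal_mul (by positivity),
          ENNReal.ofReal_mul (by positivity), ENNReal.ofReal_mul (by positivity),
          ENNReal.ofReal_toReal measure_ball_lt_top.ne]
        ring

/-- Morrey embeds into the thermic Besov space `Ḃ^{-α}_{∞,∞}`: for `α ∈ (0,N)` there is
`c = c(N,α) > 0` such that for every nonnegative measurable `u` with finite Morrey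
`L^{1,α}` norm, every `x` and `R > 0`,
`(4π)^{-N/2} R^{-N} ∫ e^{-|x-y|²/(4R²)} u(y) dy ≤ c ‖u‖_{L^{1,α}} R^{-α}`. -/
theorem morrey_embeds_besov (N : ℕ) (α : ℝ) (hα₀ : 0 < α) (hα : α < N) :
    ∃ c : ℝ, 0 < c ∧ ∀ (u : EuclideanSpace ℝ (Fin N) → ℝ), Measurable u →
      (∀ y, 0 ≤ u y) → morreyNorm N 1 α u ≠ ⊤ →
      ∀ (x : EuclideanSpace ℝ (Fin N)) (R : ℝ), 0 < R →
        ENNReal.ofReal ((4 * π) ^ (-(N : ℝ) / 2) * R ^ (-(N : ℝ))) *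
            (∫⁻ y, ENNReal.ofReal (Real.exp (-‖x - y‖ ^ 2 / (4 * R ^ 2)) * u y)) ≤
          ENNReal.ofReal c * morreyNorm N 1 α u * ENNReal.ofReal (R ^ (-α)) :=
  morrey_embeds_besov_general N α
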